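/- arXiv:1007.1069 — 6 statements merged into one kernel-verified Lean document; each statement's English description precedes it below -/
import Mathlib

section
/- Let a, b, c, d be real numbers and let M be the 4×4 real matrix with rows (a, b, 0, c), (b, d, c, 0), (0, c, a, −b), (c, 0, −b, d). If M is positive semidefinite, then a·d − c² − b² ≥ 0. -/
/-! The test vectors `(b, t, c, 0)` make the quadratic form of `M` the quadratic polynomial
`d t² + 2 s t + a s` in `t`, where `s = b² + c²`. Its nonnegativity forces the discriminant
`4 s (s - a d)` to be nonpositive, so `s ≤ a d` whenever `s > 0`; when `s = 0` the claim is
`0 ≤ a d`, which holds because the diagonal entries `a` and `d` of `M` are nonnegative. -/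

open Matrix

lemma le_mul_of_forall_quadratic_nonneg {a d s : ℝ} (ha : 0 ≤ a) (hd : 0 ≤ d) (hs : 0 ≤ s)
    (hq : ∀ t : ℝ, 0 ≤ d * (t * t) + 2 * s * t + a * s) : s ≤ a * d := by
  have hdiscrim := discrim_le_zero hq
  rw [discrim] at hdiscrim
  rcases hs.eq_or_lt with rfl | hs
  · exact mul_nonneg ha hd
  · nlinarith

lemma dotProduct_mulVec_testVector (a b c d t : ℝ) :
    ![b, t, c, 0] ⬝ᵥ (!![a, b, 0, c; b, d, c, 0; 0, c, a, -b; c, 0, -b, d] *ᵥ ![b, t, c, 0]) =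
      d * (t * t) + 2 * (b ^ 2 + c ^ 2) * t + a * (b ^ 2 + c ^ 2) := by
  simp only [dotProduct, mulVec, of_apply, cons_val', cons_val_fin_one, Fin.sum_univ_four,
    cons_val_zero, cons_val_one, cons_val, mul_zero, add_zero, zero_mul, zero_add, neg_mul]
  ring

theorem stmt_7 (a b c d : ℝ)
    (h : (!![a, b, 0, c; b, d, c, 0; 0, c, a, -b; c, 0, -b, d] :
      Matrix (Fin 4) (Fin 4) ℝ).PosSemidef) :
    0 ≤ a * d - c ^ 2 - b ^ 2 := by
  have hq (t : ℝ) := h.dotProduct_mulVec_nonneg ![b, t, c, 0]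
  simp only [star_trivial, dotProduct_mulVec_testVector] at hq
  have ha : 0 ≤ a := h.diag_nonneg (i := 0)
  have hd : 0 ≤ d := h.diag_nonneg (i := 1)
  linarith [le_mul_of_forall_quadratic_nonneg ha hd (by positivity) hq]
end

section
/- Define f : ℝ⁴ → ℝ⁴ by f(y₁,y₂,y₃,y₄) = (y₁ cos y₂, y₃ sin y₂ + y₁y₄ cos y₂, y₁ sin y₂, y₃ cos y₂ − y₁y₄ sin y₂). Let N' = ({0} × (−π,π] × ℝ × ℝ) ∪ ([0,∞) × {π} × ℝ × ℝ) and N = {x ∈ ℝ⁴ : x₁ ≤ 0 and x₃ = 0}. Then the restriction of f to ([0,∞) × (−π,π] × ℝ × ℝ) ∖ N' is a bijection onto ℝ⁴ ∖ N, with inverse g given by g(x) = ( (x₁²+x₃²)^{1/2}, arg(x₁+i·x₃), (x₂x₃+x₁x₄)/(x₁²+x₃²)^{1/2}, (x₁x₂−x₃x₄)/(x₁²+x₃²) ); that is, g(f(y)) = y for all y in ([0,∞)×(−π,π]×ℝ×ℝ) ∖ N' and f(g(x)) = x for all x ∈ ℝ⁴ ∖ N. -/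
/-!
On the coordinates `(x₁, x₃)`, `f` is the inverse polar-coordinate map
`(r, θ) ↦ (r cos θ, r sin θ)` and `g` is `polarCoord`, a bijection between
`ℝ² ∖ ((-∞, 0] × {0})` and `(0, ∞) × (-π, π)`, and removing `N'` and `N` leaves exactly
the preimages of these two sets. For fixed `(r, θ)` with `r > 0`, the remaining
coordinates transform linearly, `(y₃, y₄) ↦ (y₃ sin θ + r y₄ cos θ, y₃ cos θ - r y₄ sin θ)`,
with inverse `(x₂, x₄) ↦ (x₂ sin θ + x₄ cos θ, (x₂ cos θ - x₄ sin θ) / r)`, which is the last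
two components of `g` once `x₁ = r cos θ` and `x₃ = r sin θ` are substituted.
-/

/-- The coordinate transformation `f` from the paper (on ℝ⁴, represented as ℝ×ℝ×ℝ×ℝ). -/
noncomputable def Fmap : ℝ × ℝ × ℝ × ℝ → ℝ × ℝ × ℝ × ℝ := fun y =>
  (y.1 * Real.cos y.2.1,
   y.2.2.1 * Real.sin y.2.1 + y.1 * y.2.2.2 * Real.cos y.2.1,
   y.1 * Real.sin y.2.1,
   y.2.2.1 * Real.cos y.2.1 - y.1 * y.2.2.2 * Real.sin y.2.1)

/-- The inverse transformation `g` from the paper. -/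
noncomputable def Gmap : ℝ × ℝ × ℝ × ℝ → ℝ × ℝ × ℝ × ℝ := fun x =>
  (Real.sqrt (x.1 ^ 2 + x.2.2.1 ^ 2),
   Complex.arg ((x.1 : ℂ) + (x.2.2.1 : ℂ) * Complex.I),
   (x.2.1 * x.2.2.1 + x.1 * x.2.2.2) / Real.sqrt (x.1 ^ 2 + x.2.2.1 ^ 2),
   (x.1 * x.2.1 - x.2.2.1 * x.2.2.2) / (x.1 ^ 2 + x.2.2.1 ^ 2))

/-- The exceptional set `N'` in the domain. -/
def Nprime : Set (ℝ × ℝ × ℝ × ℝ) :=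
  (({0} : Set ℝ) ×ˢ (Set.Ioc (-Real.pi) Real.pi ×ˢ ((Set.univ : Set ℝ) ×ˢ (Set.univ : Set ℝ))))
    ∪ (Set.Ici (0 : ℝ) ×ˢ (({Real.pi} : Set ℝ) ×ˢ ((Set.univ : Set ℝ) ×ˢ (Set.univ : Set ℝ))))

/-- The exceptional set `N = {x : x₁ ≤ 0, x₃ = 0}` in the range. -/
def Nset : Set (ℝ × ℝ × ℝ × ℝ) := {x | x.1 ≤ 0 ∧ x.2.2.1 = 0}


open Real Set

lemma mem_diff_Nprime_iff (y : ℝ × ℝ × ℝ × ℝ) :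
    y ∈ (Ici (0 : ℝ) ×ˢ (Ioc (-π) π ×ˢ ((univ : Set ℝ) ×ˢ (univ : Set ℝ)))) \ Nprime ↔
      (y.1, y.2.1) ∈ polarCoord.target := by
  obtain ⟨r, θ, a, b⟩ := y
  simp only [Nprime, polarCoord_target, mem_sdiff, mem_union, mem_prod, mem_Ici, mem_Ioc,
    mem_Ioi, mem_Ioo, mem_singleton_iff, mem_univ, and_true]
  constructor
  · rintro ⟨⟨hr, hθl, hθu⟩, hN⟩
    exact ⟨hr.lt_of_ne fun h => hN (Or.inl ⟨h.symm, hθl, hθu⟩),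
      hθl, hθu.lt_of_ne fun h => hN (Or.inr ⟨hr, h⟩)⟩
  · rintro ⟨hr, hθl, hθu⟩
    refine ⟨⟨hr.le, hθl, hθu.le⟩, ?_⟩
    rintro (⟨h, -⟩ | ⟨-, h⟩)
    exacts [hr.ne' h, hθu.ne h]

lemma notMem_Nset_iff (x : ℝ × ℝ × ℝ × ℝ) :
    x ∉ Nset ↔ (x.1, x.2.2.1) ∈ polarCoord.source := by
  simp only [Nset, polarCoord_source, mem_ofPred_eq, mem_union, not_and_or, not_le]

lemma Fmap_fst_snd_snd_fst (y : ℝ × ℝ × ℝ × ℝ) :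
    ((Fmap y).1, (Fmap y).2.2.1) = polarCoord.symm (y.1, y.2.1) :=
  rfl

lemma Gmap_fst_snd_fst (x : ℝ × ℝ × ℝ × ℝ) :
    ((Gmap x).1, (Gmap x).2.1) = polarCoord (x.1, x.2.2.1) := by
  simp only [Gmap, polarCoord_apply, Complex.equivRealProd_symm_apply]

lemma Gmap_polarCoord_symm {r θ : ℝ} (h : (r, θ) ∈ polarCoord.target) (q t : ℝ) :
    Gmap (r * cos θ, q, r * sin θ, t) =
      (r, θ, q * sin θ + t * cos θ, (q * cos θ - t * sin θ) / r) := by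
  have hr : r ≠ 0 := h.1.ne'
  have hpolar : polarCoord (r * cos θ, r * sin θ) = (r, θ) := polarCoord.right_inv h
  simp only [polarCoord_apply, Complex.equivRealProd_symm_apply, Prod.mk.injEq] at hpolar
  obtain ⟨hsqrt, harg⟩ := hpolar
  have hnorm : (r * cos θ) ^ 2 + (r * sin θ) ^ 2 = r ^ 2 := by
    linear_combination r ^ 2 * sin_sq_add_cos_sq θ
  simp only [Gmap]
  rw [hsqrt, harg, hnorm]
  simp only [Prod.mk.injEq, true_and]
  constructor <;> field_simp

lemma Gmap_Fmap {y : ℝ × ℝ × ℝ × ℝ} (hy : (y.1, y.2.1) ∈ polarCoord.target) :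
    Gmap (Fmap y) = y := by
  obtain ⟨r, θ, a, b⟩ := y
  have hr : r ≠ 0 := hy.1.ne'
  simp only [Fmap, Gmap_polarCoord_symm hy, Prod.mk.injEq, true_and]
  constructor
  · linear_combination a * sin_sq_add_cos_sq θ
  · field_simp
    linear_combination r * b * sin_sq_add_cos_sq θ

lemma Fmap_Gmap {x : ℝ × ℝ × ℝ × ℝ} (hx : (x.1, x.2.2.1) ∈ polarCoord.source) :
    Fmap (Gmap x) = x := by
  obtain ⟨u, q, v, t⟩ := x
  obtain ⟨⟨r, θ⟩, hp⟩ : ∃ p, polarCoord (u, v) = p := ⟨_, rfl⟩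
  have hrθ : (r, θ) ∈ polarCoord.target := hp ▸ polarCoord.map_source hx
  have huv : polarCoord.symm (r, θ) = (u, v) := hp ▸ polarCoord.left_inv hx
  simp only [polarCoord_symm_apply, Prod.mk.injEq] at huv
  obtain ⟨rfl, rfl⟩ := huv
  have hr : r ≠ 0 := hrθ.1.ne'
  simp only [Gmap_polarCoord_symm hrθ, Fmap, Prod.mk.injEq, true_and]
  constructor
  · field_simp
    linear_combination q * sin_sq_add_cos_sq θ
  · field_simp
    linear_combination t * sin_sq_add_cos_sq θ

theorem stmt_9 :
    Set.BijOn Fmap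
      ((Set.Ici (0 : ℝ) ×ˢ (Set.Ioc (-Real.pi) Real.pi ×ˢ
          ((Set.univ : Set ℝ) ×ˢ (Set.univ : Set ℝ)))) \ Nprime)
      Nsetᶜ ∧
    (∀ y ∈ (Set.Ici (0 : ℝ) ×ˢ (Set.Ioc (-Real.pi) Real.pi ×ˢ
        ((Set.univ : Set ℝ) ×ˢ (Set.univ : Set ℝ)))) \ Nprime, Gmap (Fmap y) = y) ∧
    (∀ x : ℝ × ℝ × ℝ × ℝ, x ∉ Nset → Fmap (Gmap x) = x) := by
  have hgf : ∀ y ∈ (Ici (0 : ℝ) ×ˢ (Ioc (-π) π ×ˢ ((univ : Set ℝ) ×ˢ (univ : Set ℝ)))) \ Nprime,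
      Gmap (Fmap y) = y :=
    fun y hy => Gmap_Fmap ((mem_diff_Nprime_iff y).1 hy)
  have hfg : ∀ x ∉ Nset, Fmap (Gmap x) = x :=
    fun x hx => Fmap_Gmap ((notMem_Nset_iff x).1 hx)
  refine ⟨InvOn.bijOn ⟨hgf, hfg⟩ (fun y hy => ?_) (fun x hx => ?_), hgf, hfg⟩
  · rw [mem_compl_iff, notMem_Nset_iff, Fmap_fst_snd_snd_fst]
    exact polarCoord.map_target ((mem_diff_Nprime_iff y).1 hy)
  · rw [mem_diff_Nprime_iff, Gmap_fst_snd_fst]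
    exact polarCoord.map_source ((notMem_Nset_iff x).1 hx)
end

section
/- Let a, b, c, d be real numbers with a > 0 and D := a·d − c² − b² > 0. Then for every z₄ ∈ ℝ, ∫₀^∞ ∫_{−π}^{π} ∫_{−∞}^{∞} (2π)^{−2} D^{−1} · z₁² · exp( −(2D)^{−1}·( z₁²·(d + a·z₄² − 2b·z₄) + a·z₃² − 2c·z₁·z₃ ) ) dz₃ dz₂ dz₁ = (a/2)·D·( (a·z₄ − b)² + D )^{−3/2}. -/
/-!
The `z₃`-integrand is a Gaussian in `z₃`; completing the square integrates it out and leaves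
`√(2πD/a) · z₁² · exp (-E z₁² / (2aD))` with `E = (a z₄ - b)² + D`, because
`a (d + a z₄² - 2b z₄) - c² = E`. The `z₂`-integral is a factor `2π`, and the remaining
half-line Gaussian moment `∫₀^∞ t² exp (-α t²) dt = √π / 4 · α ^ (-3/2)`, with
`α = E / (2aD)`, is a value of the Gamma function.
-/

open MeasureTheory Real Set

theorem integral_exp_neg_mul_sq_add_mul_add {p : ℝ} (hp : 0 < p) (q r : ℝ) :
    ∫ x : ℝ, exp (-p * x ^ 2 + q * x + r) = √(π / p) * exp (q ^ 2 / (4 * p) + r) := by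
  have hsquare (x : ℝ) :
      -p * x ^ 2 + q * x + r = -p * (x - q / (2 * p)) ^ 2 + (q ^ 2 / (4 * p) + r) := by
    field_simp
    ring
  simp_rw [hsquare, exp_add, integral_mul_const]
  rw [integral_sub_right_eq_self (fun x => exp (-p * x ^ 2)), integral_gaussian]

theorem integral_Ioi_sq_mul_exp_neg_mul_sq {α : ℝ} (hα : 0 < α) :
    ∫ x in Ioi (0 : ℝ), x ^ 2 * exp (-α * x ^ 2) = √π / 4 * α ^ (-(3 : ℝ) / 2) := by
  have hGamma : Gamma (3 / 2) = √π / 2 := by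
    rw [show (3 / 2 : ℝ) = 1 / 2 + 1 by norm_num, Gamma_add_one (by norm_num), Gamma_one_half_eq]
    ring
  have := integral_rpow_mul_exp_neg_mul_rpow (p := 2) (q := 2) two_pos (by norm_num) hα
  norm_num [rpow_two, hGamma] at this
  simp_rw [neg_mul, neg_div, this]
  ring

theorem rpow_neg_three_halves_div {x y : ℝ} (hx : 0 ≤ x) (hy : 0 < y) :
    (x / y) ^ (-(3 : ℝ) / 2) = x ^ (-(3 : ℝ) / 2) * (y * √y) := by
  rw [div_rpow hx hy.le, div_eq_mul_inv, ← rpow_neg hy.le, sqrt_eq_rpow,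
    ← rpow_one_add' hy.le (by norm_num)]
  norm_num

theorem integral_exp_neg_inv_two_mul_quadratic_form {a D : ℝ} (ha : 0 < a) (hD : 0 < D)
    (c K x : ℝ) :
    ∫ y : ℝ, exp (-(2 * D)⁻¹ * (x ^ 2 * K + a * y ^ 2 - 2 * c * x * y))
      = √(2 * π * D / a) * exp (-((a * K - c ^ 2) / (2 * a * D)) * x ^ 2) := by
  have hquadratic (y : ℝ) : -(2 * D)⁻¹ * (x ^ 2 * K + a * y ^ 2 - 2 * c * x * y)
      = -(a / (2 * D)) * y ^ 2 + c * x / D * y + -(x ^ 2 * K / (2 * D)) := by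
    field_simp
    ring
  have hexponent : (c * x / D) ^ 2 / (4 * (a / (2 * D))) + -(x ^ 2 * K / (2 * D))
      = -((a * K - c ^ 2) / (2 * a * D)) * x ^ 2 := by
    field_simp
    ring
  simp_rw [hquadratic]
  rw [integral_exp_neg_mul_sq_add_mul_add (by positivity), hexponent,
    show π / (a / (2 * D)) = 2 * π * D / a by field_simp]

theorem stmt_11 (a b c d : ℝ) (ha : 0 < a) (hD : 0 < a * d - c ^ 2 - b ^ 2) (z₄ : ℝ) :
    (∫ z₁ in Set.Ici (0 : ℝ), ∫ z₂ in Set.Ioc (-Real.pi) Real.pi, ∫ z₃ : ℝ,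
        ((2 * Real.pi) ^ 2)⁻¹ * (a * d - c ^ 2 - b ^ 2)⁻¹ * z₁ ^ 2 *
          Real.exp (-(2 * (a * d - c ^ 2 - b ^ 2))⁻¹ *
            (z₁ ^ 2 * (d + a * z₄ ^ 2 - 2 * b * z₄) + a * z₃ ^ 2 - 2 * c * z₁ * z₃)))
      = a / 2 * (a * d - c ^ 2 - b ^ 2) *
          ((a * z₄ - b) ^ 2 + (a * d - c ^ 2 - b ^ 2)) ^ (-(3 : ℝ) / 2) := by
  set D := a * d - c ^ 2 - b ^ 2
  set E := (a * z₄ - b) ^ 2 + D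
  have hE : 0 < E := by positivity
  have hE_eq : a * (d + a * z₄ ^ 2 - 2 * b * z₄) - c ^ 2 = E := by ring
  simp_rw [integral_const_mul, integral_exp_neg_inv_two_mul_quadratic_form ha hD, hE_eq,
    setIntegral_const, smul_eq_mul]
  rw [measureReal_def, volume_Ioc, ENNReal.toReal_ofReal (by linarith [pi_pos]),
    integral_Ici_eq_integral_Ioi]
  have hsqrt : √(2 * π * D / a) * √π * √(2 * a * D) = 2 * π * D := by
    rw [← sqrt_mul (by positivity), ← sqrt_mul (by positivity),
      show 2 * π * D / a * π * (2 * a * D) = (2 * π * D) ^ 2 by field_simp]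
    exact sqrt_sq (by positivity)
  calc _ = 2 * π * ((2 * π) ^ 2)⁻¹ * D⁻¹ * √(2 * π * D / a) *
        ∫ t in Ioi 0, t ^ 2 * exp (-(E / (2 * a * D)) * t ^ 2) := by
        rw [← integral_const_mul]
        congr 1 with t
        ring
    _ = a / (4 * π) * (√(2 * π * D / a) * √π * √(2 * a * D)) * E ^ (-(3 : ℝ) / 2) := by
        rw [integral_Ioi_sq_mul_exp_neg_mul_sq (by positivity),
          rpow_neg_three_halves_div hE.le (by positivity)]
        field_simp
    _ = _ := by
        rw [hsqrt]
        field_simp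
        norm_num
end

section
/- Let a, b be real numbers with a > 0 and let D > 0. Define p(y) = (a/2)·D·( (a·y − b)² + D )^{−3/2} for y ∈ ℝ. Then ∫_ℝ (y − b/a)²·p(y) dy = +∞; that is, a random variable with density p has infinite variance. -/
open MeasureTheory

/-!
After the translation `y = x + b/a` the integrand becomes `x² · p₀(x)` with
`p₀(x) = (a/2)·D·((a x)² + D)^{-3/2}`. Once `a x > √D` we have `(a x)² + D ≤ (√2 a x)²`,
so the integrand is bounded below by a positive multiple of `1/x`, which is not integrable
at `+∞`.
-/

/-- The density `p(y) = (a/2)·D·((a·y − b)² + D)^{−3/2}`. -/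
noncomputable def pdfIF (a b D y : ℝ) : ℝ :=
  a / 2 * D * ((a * y - b) ^ 2 + D) ^ (-(3 : ℝ) / 2)

theorem lintegral_ofReal_eq_top_of_const_mul_inv_le {f : ℝ → ℝ} {C M : ℝ} (hC : 0 < C)
    (hM : 0 ≤ M) (hf : ∀ x > M, C * x⁻¹ ≤ f x) :
    ∫⁻ x, ENNReal.ofReal (f x) = ⊤ := by
  have hinv : ∫⁻ x in Set.Ioi M, ENNReal.ofReal x⁻¹ = ⊤ := by
    by_contra h
    refine not_integrableOn_Ioi_inv ((lintegral_ofReal_ne_top_iff_integrable ?_ ?_).1 h)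
    · exact measurable_inv.aestronglyMeasurable
    · filter_upwards [ae_restrict_mem measurableSet_Ioi] with x hx
      exact inv_nonneg.2 (hM.trans (le_of_lt hx))
  refine top_unique ?_
  calc ⊤ = ENNReal.ofReal C * ∫⁻ x in Set.Ioi M, ENNReal.ofReal x⁻¹ := by
        rw [hinv, ENNReal.mul_top (ENNReal.ofReal_pos.2 hC).ne']
    _ = ∫⁻ x in Set.Ioi M, ENNReal.ofReal (C * x⁻¹) := by
        rw [← lintegral_const_mul _ measurable_inv.ennreal_ofReal]
        simp_rw [ENNReal.ofReal_mul hC.le]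
    _ ≤ ∫⁻ x in Set.Ioi M, ENNReal.ofReal (f x) :=
        setLIntegral_mono' measurableSet_Ioi fun x hx => ENNReal.ofReal_le_ofReal (hf x hx)
    _ ≤ ∫⁻ x, ENNReal.ofReal (f x) := setLIntegral_le_lintegral _ _

theorem Real.sq_rpow_neg_three_halves {t : ℝ} (ht : 0 ≤ t) :
    (t ^ 2) ^ (-(3 : ℝ) / 2) = (t ^ 3)⁻¹ := by
  rw [← Real.rpow_natCast, ← Real.rpow_mul ht, show ((2 : ℕ) : ℝ) * (-3 / 2) = -(3 : ℕ) by norm_num,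
    Real.rpow_neg ht, Real.rpow_natCast]

theorem pdfIF_add_div {a : ℝ} (ha : a ≠ 0) (b D x : ℝ) : pdfIF a b D (x + b / a) = pdfIF a 0 D x := by
  simp only [pdfIF, mul_add, mul_div_cancel₀ _ ha, add_sub_cancel_right, sub_zero]

theorem inv_le_sq_mul_pdfIF_zero {a D x : ℝ} (ha : 0 < a) (hD : 0 < D) (hx : √D / a < x) :
    D / (2 * √2 ^ 3 * a ^ 2) * x⁻¹ ≤ x ^ 2 * pdfIF a 0 D x := by
  have hx0 : 0 < x := (div_nonneg (Real.sqrt_nonneg D) ha.le).trans_lt hx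
  have hDx : D ≤ (a * x) ^ 2 := by
    rw [div_lt_iff₀ ha] at hx
    simpa [Real.sq_sqrt hD.le] using pow_le_pow_left₀ (Real.sqrt_nonneg D) (by linarith : √D ≤ a * x) 2
  have hden : (a * x - 0) ^ 2 + D ≤ (√2 * a * x) ^ 2 := by
    rw [mul_assoc, mul_pow, Real.sq_sqrt zero_le_two]; linarith
  have hrpow := Real.rpow_le_rpow_of_nonpos (by positivity) hden (by norm_num : -(3 : ℝ) / 2 ≤ 0)
  rw [Real.sq_rpow_neg_three_halves (by positivity)] at hrpow
  calc D / (2 * √2 ^ 3 * a ^ 2) * x⁻¹ = x ^ 2 * (a / 2 * D * ((√2 * a * x) ^ 3)⁻¹) := by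
        field_simp
    _ ≤ x ^ 2 * pdfIF a 0 D x := by
        unfold pdfIF; gcongr

theorem stmt_13 (a b D : ℝ) (ha : 0 < a) (hD : 0 < D) :
    (∫⁻ y : ℝ, ENNReal.ofReal ((y - b / a) ^ 2 * pdfIF a b D y)) = ⊤ := by
  rw [← lintegral_add_right_eq_self _ (b / a)]
  simp_rw [add_sub_cancel_right, pdfIF_add_div ha.ne']
  exact lintegral_ofReal_eq_top_of_const_mul_inv_le (by positivity) (by positivity)
    fun x hx => inv_le_sq_mul_pdfIF_zero ha hD hx
end

section
/- Let (Ω, 𝓑, ℙ) be a probability space and X = (X₁, X₂, X₃, X₄) : Ω → ℝ⁴ a measurable map whose characteristic function satisfies E[exp(i·uᵀX)] = exp(−(1/2)·uᵀ M u) for all u ∈ ℝ⁴, where M is the 4×4 real matrix with rows (a, b, 0, c), (b, d, c, 0), (0, c, a, −b), (c, 0, −b, d). Suppose a·d − c² − b² = 0 and a > 0. Then almost surely X₁² + X₃² > 0 and (X₁X₂ − X₃X₄)/(X₁² + X₃²) = b/a. -/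
/-!
Along every direction `u`, the characteristic function identifies the law of `⟨u, X⟩` as the
centred Gaussian of variance `uᵀ M u`. The relation `a d = b² + c²` puts `(-b, a, -c, 0)` and
`(-c, 0, b, a)` in the kernel of `M`, so `a X₂ = b X₁ + c X₃` and `a X₄ = c X₁ - b X₃` almost
surely, and these give `X₁ X₂ - X₃ X₄ = (b / a) (X₁² + X₃²)`. Finally `X₁` has variance `a > 0`,
so it has no atom at `0`.
-/

open MeasureTheory Complex
open scoped NNReal Matrix

section

open ProbabilityTheory

variable {Ω : Type*} [MeasurableSpace Ω] {P : Measure Ω}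

lemma map_eq_gaussianReal_of_integral_exp [IsProbabilityMeasure P] {Y : Ω → ℝ}
    (hY : Measurable Y) {v : ℝ≥0}
    (h : ∀ t : ℝ, ∫ ω, exp (I * ((t * Y ω : ℝ) : ℂ)) ∂P
      = exp (-(1 / 2 : ℂ) * ((v * t ^ 2 : ℝ) : ℂ))) :
    P.map Y = gaussianReal 0 v := by
  have : IsProbabilityMeasure (P.map Y) := Measure.isProbabilityMeasure_map hY.aemeasurable
  refine Measure.ext_of_charFun (funext fun t => ?_)
  calc charFun (P.map Y) t = ∫ ω, exp (I * ((t * Y ω : ℝ) : ℂ)) ∂P := by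
        rw [charFun_apply_real, integral_map hY.aemeasurable (by fun_prop)]
        congr with ω
        push_cast
        congr 1
        ring
    _ = charFun (gaussianReal 0 v) t := by
        rw [h t, charFun_gaussianReal]
        push_cast
        congr 1
        ring

lemma map_sum_mul_eq_gaussianReal [IsProbabilityMeasure P] {ι : Type*} [Fintype ι]
    (M : Matrix ι ι ℝ) {X : Ω → ι → ℝ} (hX : Measurable X)
    (hchar : ∀ u : ι → ℝ, ∫ ω, exp (I * ((∑ j, u j * X ω j : ℝ) : ℂ)) ∂P
      = exp (-(1 / 2 : ℂ) * ((u ⬝ᵥ M *ᵥ u : ℝ) : ℂ)))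
    (u : ι → ℝ) {v : ℝ≥0} (hv : u ⬝ᵥ M *ᵥ u = v) :
    P.map (fun ω => ∑ j, u j * X ω j) = gaussianReal 0 v := by
  refine map_eq_gaussianReal_of_integral_exp (by fun_prop) fun t => ?_
  have hsum (ω : Ω) : ∑ j, (t • u) j * X ω j = t * ∑ j, u j * X ω j := by
    simp only [Pi.smul_apply, smul_eq_mul, Finset.mul_sum, mul_assoc]
  have hquad : (t • u) ⬝ᵥ M *ᵥ (t • u) = v * t ^ 2 := by
    rw [Matrix.mulVec_smul, smul_dotProduct, dotProduct_smul, hv, smul_eq_mul, smul_eq_mul]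
    ring
  simpa only [hsum, hquad] using hchar (t • u)

lemma ae_eq_of_map_eq_gaussianReal_zero_var {Y : Ω → ℝ} (hY : AEMeasurable Y P) {μ : ℝ}
    (h : P.map Y = gaussianReal μ 0) : ∀ᵐ ω ∂P, Y ω = μ := by
  refine ae_of_ae_map (p := (· = μ)) hY ?_
  rw [h, gaussianReal_zero_var, ae_dirac_eq]
  rfl

lemma ae_ne_of_map_eq_gaussianReal {Y : Ω → ℝ} (hY : AEMeasurable Y P) {μ : ℝ} {v : ℝ≥0}
    (hv : v ≠ 0) (h : P.map Y = gaussianReal μ v) (c : ℝ) : ∀ᵐ ω ∂P, Y ω ≠ c := by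
  have := nullSingletonClass_gaussianReal (μ := μ) hv
  exact ae_of_ae_map (p := (· ≠ c)) hY (h ▸ Measure.ae_ne _ c)

end

theorem stmt_15 {Ω : Type*} [MeasurableSpace Ω] (ℙ : Measure Ω) [IsProbabilityMeasure ℙ]
    (a b c d : ℝ) (hD : a * d - c ^ 2 - b ^ 2 = 0) (ha : 0 < a)
    (X : Ω → (Fin 4 → ℝ)) (hX : Measurable X)
    (hchar : ∀ u : Fin 4 → ℝ,
      (∫ ω, Complex.exp (Complex.I * ((∑ j, u j * X ω j : ℝ) : ℂ)) ∂ℙ)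
        = Complex.exp (-(1 / 2 : ℂ) *
            ((dotProduct u
              ((!![a, b, 0, c; b, d, c, 0; 0, c, a, -b; c, 0, -b, d] :
                Matrix (Fin 4) (Fin 4) ℝ).mulVec u) : ℝ) : ℂ))) :
    ∀ᵐ ω ∂ℙ, 0 < X ω 0 ^ 2 + X ω 2 ^ 2 ∧
      (X ω 0 * X ω 1 - X ω 2 * X ω 3) / (X ω 0 ^ 2 + X ω 2 ^ 2) = b / a := by
  have hmeas (u : Fin 4 → ℝ) : AEMeasurable (fun ω => ∑ j, u j * X ω j) ℙ := by fun_prop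
  have law := map_sum_mul_eq_gaussianReal _ hX hchar
  have h₁ := ae_eq_of_map_eq_gaussianReal_zero_var (hmeas _) (law ![-b, a, -c, 0] (v := 0) (by
    simp [Matrix.mulVec, dotProduct, Fin.sum_univ_four]; linear_combination a * hD))
  have h₂ := ae_eq_of_map_eq_gaussianReal_zero_var (hmeas _) (law ![-c, 0, b, a] (v := 0) (by
    simp [Matrix.mulVec, dotProduct, Fin.sum_univ_four]; linear_combination a * hD))
  have h₀ := ae_ne_of_map_eq_gaussianReal (hmeas _) (v := a.toNNReal) (by simpa using ha)
    (law ![1, 0, 0, 0] (by simp [Matrix.mulVec, dotProduct, Fin.sum_univ_four, ha.le])) 0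
  filter_upwards [h₀, h₁, h₂] with ω h₀ h₁ h₂
  simp only [Fin.sum_univ_four, Fin.isValue, Matrix.cons_val_zero, one_mul, Matrix.cons_val_one,
    zero_mul, add_zero, Matrix.cons_val, ne_eq, neg_mul] at h₀ h₁ h₂
  have hpos : 0 < X ω 0 ^ 2 + X ω 2 ^ 2 := by positivity
  refine ⟨hpos, ?_⟩
  rw [div_eq_div_iff hpos.ne' ha.ne']
  linear_combination X ω 0 * h₁ - X ω 2 * h₂
end

section
/- Let (Ω, 𝓑, ℙ) be a probability space and let x, y : ℝ → L²(Ω; ℝ) be zero-mean real-valued processes that are jointly wide-sense stationary: there are functions ρ_x, ρ_{yx} : ℝ → ℝ with ρ_x twice continuously differentiable and ρ_{yx} continuously differentiable such that E[x(t)x(s)] = E[y(t)y(s)] = ρ_x(t−s) and E[y(t)x(s)] = ρ_{yx}(t−s) for all t, s ∈ ℝ, with ρ_x(0) > 0. Suppose y is mean-square differentiable with derivative ẏ(t) ∈ L²(Ω; ℝ) satisfying E[ẏ(t)·ẏ(s)] = −ρ_x''(t−s) and E[ẏ(t)·x(s)] = ρ_{yx}'(t−s) for all t, s ∈ ℝ.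 If −ρ_x(0)·ρ_x''(0) = (ρ_{yx}'(0))², then there exist α > 0 and β ≥ 0 with ρ_x(t) = α·cos(β·t) for all t ∈ ℝ; specifically α = ρ_x(0) and β = ( −ρ_x''(0)/ρ_x(0) )^{1/2}. -/
/-!
Since `E[ẏ(t)²] · E[x(t)²] = E[ẏ(t) x(t)]²`, the Cauchy–Schwarz inequality is an equality, so
`ẏ(t) = c x(t)` almost surely with `c = ρ_{yx}'(0) / ρ_x(0)`. Hence `ρ_x'' = -c² ρ_x`; evenness of
`ρ_x` gives `ρ_x'(0) = 0`, and the only solution of this initial value problem is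
`ρ_x(0) cos(|c| t)`: the difference `g` of two solutions has constant energy `g'² + c² g²`, which
vanishes at `0`.
-/

open MeasureTheory

lemma Function.Even.deriv_zero {F : Type*} [NormedAddCommGroup F] [NormedSpace ℝ F]
    {f : ℝ → F} (hf : f.Even) : deriv f 0 = 0 := by
  have h := deriv_comp_neg f (0 : ℝ)
  rw [show (fun x => f (-x)) = f from funext hf, neg_zero] at h
  have h2 : (2 : ℝ) • deriv f 0 = 0 := by rw [two_smul]; nth_rewrite 1 [h]; exact neg_add_cancel _
  exact (smul_eq_zero.mp h2).resolve_left two_ne_zero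

lemma even_of_integral_mul_eq_comp_sub {Ω : Type*} [MeasurableSpace Ω] {μ : Measure Ω}
    {x : ℝ → Ω → ℝ} {ρ : ℝ → ℝ} (hcov : ∀ t s, ∫ ω, x t ω * x s ω ∂μ = ρ (t - s)) :
    ρ.Even := by
  intro u
  calc ρ (-u) = ∫ ω, x 0 ω * x u ω ∂μ := by rw [hcov, zero_sub]
    _ = ∫ ω, x u ω * x 0 ω ∂μ := by simp only [mul_comm]
    _ = ρ u := by rw [hcov, sub_zero]

lemma ae_eq_const_mul_of_sq_integral_mul_eq {Ω : Type*} [MeasurableSpace Ω] {μ : Measure Ω}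
    {f g : Ω → ℝ} (hf : MemLp f 2 μ) (hg : MemLp g 2 μ) (hg0 : ∫ ω, g ω * g ω ∂μ ≠ 0)
    (h : (∫ ω, f ω * g ω ∂μ) ^ 2 = (∫ ω, f ω * f ω ∂μ) * ∫ ω, g ω * g ω ∂μ) :
    f =ᵐ[μ] fun ω => (∫ ω, f ω * g ω ∂μ) / (∫ ω, g ω * g ω ∂μ) * g ω := by
  set A := ∫ ω, f ω * f ω ∂μ
  set B := ∫ ω, f ω * g ω ∂μ
  set G := ∫ ω, g ω * g ω ∂μ
  set c := B / G
  set Z : Ω → ℝ := fun ω => f ω - c * g ω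
  have hZ : MemLp Z 2 μ := hf.sub (hg.const_mul c)
  have hff : Integrable (fun ω => f ω * f ω) μ := hf.integrable_mul hf
  have hfg : Integrable (fun ω => f ω * g ω) μ := hf.integrable_mul hg
  have hgg : Integrable (fun ω => g ω * g ω) μ := hg.integrable_mul hg
  have hexpand : (fun ω => Z ω * Z ω) =
      fun ω => f ω * f ω - 2 * c * (f ω * g ω) + c ^ 2 * (g ω * g ω) := by
    funext ω; ring
  have hZZ : ∫ ω, Z ω * Z ω ∂μ = 0 := by
    rw [hexpand, integral_add, integral_sub, integral_const_mul, integral_const_mul]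
    · have hA : A = c * B := by
        rw [div_mul_eq_mul_div, ← sq, h, mul_div_cancel_right₀ _ hg0]
      linear_combination hA + c * div_mul_cancel₀ B hg0
    exacts [hff, hfg.const_mul _, hff.sub (hfg.const_mul _), hgg.const_mul _]
  have hZZ0 : (fun ω => Z ω * Z ω) =ᵐ[μ] 0 :=
    (integral_eq_zero_iff_of_nonneg (fun ω => mul_self_nonneg (Z ω))
      (hZ.integrable_mul hZ)).mp hZZ
  filter_upwards [hZZ0] with ω hω
  exact sub_eq_zero.mp (mul_self_eq_zero.mp hω)

lemma eq_zero_of_hasDerivAt_of_hasDerivAt_neg_sq_mul {g g' : ℝ → ℝ} {b : ℝ}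
    (hg : ∀ t, HasDerivAt g (g' t) t) (hg' : ∀ t, HasDerivAt g' (-(b ^ 2 * g t)) t)
    (h0 : g 0 = 0) (h0' : g' 0 = 0) (t : ℝ) : g t = 0 := by
  set E : ℝ → ℝ := fun s => g' s ^ 2 + b ^ 2 * g s ^ 2
  have hE : ∀ t, HasDerivAt E 0 t := fun t =>
    (((hg' t).pow 2).add (((hg t).pow 2).const_mul (b ^ 2))).congr_deriv (by push_cast; ring)
  have hE0 : ∀ t, E t = 0 := fun t => by
    rw [is_const_of_deriv_eq_zero (fun u => (hE u).differentiableAt) (fun u => (hE u).deriv) t 0]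
    simp [E, h0, h0']
  have hg'0 : ∀ t, g' t = 0 := fun t => by
    have := hE0 t
    nlinarith [sq_nonneg (g' t), mul_nonneg (sq_nonneg b) (sq_nonneg (g t))]
  rw [is_const_of_deriv_eq_zero (fun u => (hg u).differentiableAt)
    (fun u => by rw [(hg u).deriv, hg'0 u]) t 0, h0]

lemma eq_mul_cos_of_deriv_deriv_eq {f : ℝ → ℝ} {b : ℝ} (hf : ContDiff ℝ 2 f)
    (hode : ∀ t, deriv (deriv f) t = -(b ^ 2 * f t)) (hf'0 : deriv f 0 = 0) (t : ℝ) :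
    f t = f 0 * Real.cos (b * t) := by
  have hf' : Differentiable ℝ f := hf.differentiable (by norm_num)
  have hf'' : Differentiable ℝ (deriv f) :=
    ((contDiff_succ_iff_deriv (n := 1)).mp hf).2.2.differentiable (by norm_num)
  have hb : ∀ t : ℝ, HasDerivAt (fun u : ℝ => b * u) b t := fun t => by
    simpa using (hasDerivAt_id t).const_mul b
  have hg : ∀ t, HasDerivAt (fun u => f u - f 0 * Real.cos (b * u))
      (deriv f t + f 0 * b * Real.sin (b * t)) t := fun t =>
    ((hf' t).hasDerivAt.sub ((hb t).cos.const_mul (f 0))).congr_deriv (by ring)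
  have hg' : ∀ t, HasDerivAt (fun u => deriv f u + f 0 * b * Real.sin (b * u))
      (-(b ^ 2 * (f t - f 0 * Real.cos (b * t)))) t := fun t =>
    ((hf'' t).hasDerivAt.add ((hb t).sin.const_mul (f 0 * b))).congr_deriv
      (by rw [hode t]; ring)
  have := eq_zero_of_hasDerivAt_of_hasDerivAt_neg_sq_mul hg hg' (by simp) (by simp [hf'0]) t
  linarith

theorem stmt_19_general {Ω : Type*} [MeasurableSpace Ω] (ℙ : Measure Ω)
    (x ydot : ℝ → Ω → ℝ) (ρx ρyx : ℝ → ℝ)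
    (hx2 : ∀ t : ℝ, MemLp (x t) 2 ℙ)
    (hρx : ContDiff ℝ 2 ρx)
    (hcovx : ∀ t s : ℝ, (∫ ω, x t ω * x s ω ∂ℙ) = ρx (t - s))
    (hρx0 : 0 < ρx 0)
    (hydot2 : ∀ t : ℝ, MemLp (ydot t) 2 ℙ)
    (hdd : ∀ t s : ℝ, (∫ ω, ydot t ω * ydot s ω ∂ℙ) = -(deriv (deriv ρx) (t - s)))
    (hdx : ∀ t s : ℝ, (∫ ω, ydot t ω * x s ω ∂ℙ) = deriv ρyx (t - s))
    (hkey : -(ρx 0 * deriv (deriv ρx) 0) = (deriv ρyx 0) ^ 2) :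
    ∃ α β : ℝ, 0 < α ∧ 0 ≤ β ∧ (∀ t : ℝ, ρx t = α * Real.cos (β * t)) ∧
      α = ρx 0 ∧ β = Real.sqrt (-(deriv (deriv ρx) 0) / ρx 0) := by
  set c := deriv ρyx 0 / ρx 0
  have hlin : ∀ t, ydot t =ᵐ[ℙ] fun ω => c * x t ω := fun t => by
    have h := ae_eq_const_mul_of_sq_integral_mul_eq (hydot2 t) (hx2 t)
      (by rw [hcovx, sub_self]; exact hρx0.ne') (by rw [hdd, hdx, hcovx, sub_self]; linarith)
    rwa [hdx, hcovx, sub_self] at h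
  have hode : ∀ u, deriv (deriv ρx) u = -(c ^ 2 * ρx u) := fun u => by
    have hsq : (fun ω => ydot u ω * ydot 0 ω) =ᵐ[ℙ] fun ω => c ^ 2 * (x u ω * x 0 ω) := by
      filter_upwards [hlin u, hlin 0] with ω hu h0
      rw [hu, h0]; ring
    have h := hdd u 0
    rw [integral_congr_ae hsq, integral_const_mul, hcovx, sub_zero] at h
    linarith
  have hβ : -deriv (deriv ρx) 0 / ρx 0 = c ^ 2 := by
    rw [hode]; field_simp
  refine ⟨ρx 0, _, hρx0, Real.sqrt_nonneg _, fun t => ?_, rfl, rfl⟩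
  refine eq_mul_cos_of_deriv_deriv_eq hρx (fun u => ?_)
    (even_of_integral_mul_eq_comp_sub hcovx).deriv_zero t
  rw [hβ, Real.sq_sqrt (sq_nonneg c), hode]

theorem stmt_19 {Ω : Type*} [MeasurableSpace Ω] (ℙ : Measure Ω) [IsProbabilityMeasure ℙ]
    (x y ydot : ℝ → Ω → ℝ) (ρx ρyx : ℝ → ℝ)
    (hx2 : ∀ t : ℝ, MemLp (x t) 2 ℙ) (hy2 : ∀ t : ℝ, MemLp (y t) 2 ℙ)
    (hxm : ∀ t : ℝ, (∫ ω, x t ω ∂ℙ) = 0) (hym : ∀ t : ℝ, (∫ ω, y t ω ∂ℙ) = 0)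
    (hρx : ContDiff ℝ 2 ρx) (hρyx : ContDiff ℝ 1 ρyx)
    (hcovx : ∀ t s : ℝ, (∫ ω, x t ω * x s ω ∂ℙ) = ρx (t - s))
    (hcovy : ∀ t s : ℝ, (∫ ω, y t ω * y s ω ∂ℙ) = ρx (t - s))
    (hcovyx : ∀ t s : ℝ, (∫ ω, y t ω * x s ω ∂ℙ) = ρyx (t - s))
    (hρx0 : 0 < ρx 0)
    (hydot2 : ∀ t : ℝ, MemLp (ydot t) 2 ℙ)
    (hmsdiff : ∀ t : ℝ, Filter.Tendsto
      (fun ε : ℝ => ∫ ω, ((y (t + ε) ω - y t ω) / ε - ydot t ω) ^ 2 ∂ℙ)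
      (nhdsWithin 0 {(0 : ℝ)}ᶜ) (nhds 0))
    (hdd : ∀ t s : ℝ, (∫ ω, ydot t ω * ydot s ω ∂ℙ) = -(deriv (deriv ρx) (t - s)))
    (hdx : ∀ t s : ℝ, (∫ ω, ydot t ω * x s ω ∂ℙ) = deriv ρyx (t - s))
    (hkey : -(ρx 0 * deriv (deriv ρx) 0) = (deriv ρyx 0) ^ 2) :
    ∃ α β : ℝ, 0 < α ∧ 0 ≤ β ∧ (∀ t : ℝ, ρx t = α * Real.cos (β * t)) ∧
      α = ρx 0 ∧ β = Real.sqrt (-(deriv (deriv ρx) 0) / ρx 0) :=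
  stmt_19_general ℙ x ydot ρx ρyx hx2 hρx hcovx hρx0 hydot2 hdd hdx hkey
end
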